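/- arXiv:2603.09950 — 2 statements merged into one kernel-verified Lean document; each statement's English description precedes it below -/
import Mathlib

section
/- Let (Ω, 𝓕, ℙ) be a probability space, X : Ω → ℝ a random variable whose law has density f : ℝ → ℝ with respect to Lebesgue measure, with f continuous at 0, and U : Ω → ℝ an integrable random variable independent of X. Let C ≥ 0 and, for each η > 0, let R_η : Ω → ℝ be measurable with |R_η(ω)| ≤ C·η² for all ω. Then lim_{η→0⁺} ℙ( 1{X + ηU + R_η > 0} ≠ 1{X > 0} ) / η = f(0) · 𝔼[|U|]; equivalently, ℙ(flip at step η) = η·f(0)·𝔼[|U|] + o(η) as η → 0⁺. (Proposition 1: first-order flip-rate law relating learning rate to activation sign changes.) -/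
/-!
Write `μ`, `ν` for the laws of `X`, `U` and `F` for the distribution function of `X`. The gate
flips iff `X` lies between `0` and `-(ηU + R)`, so for `|R| ≤ Cη²` the flip event is squeezed
between the events that `X` lies in the bands `(0, -ηU ± Cη²] ∪ (-ηU ∓ Cη², 0]`. By independence
the probability of a band is `∫ μ(band at u) dν(u)`, and the band at `u` has mass
`(F(-ηu ± Cη²) - F 0)⁺ + (F 0 - F(-ηu ∓ Cη²))⁺`. Continuity of `f` at `0` gives `F' 0 = f 0`, so
this mass over `η` tends to `f 0 * |u|`; boundedness of `F` upgrades the derivative to a bound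
`|F t - F 0| ≤ L|t|`, which dominates the integrand by `2L(|u| + C)`.
-/

open MeasureTheory Filter Topology

section

open ProbabilityTheory Set

lemma HasDerivAt.exists_abs_sub_le_mul_abs {F : ℝ → ℝ} {d x B : ℝ} (hF : HasDerivAt F d x)
    (hB : ∀ t, |F t - F x| ≤ B) : ∃ L, ∀ t, |F t - F x| ≤ L * |t - x| := by
  obtain ⟨K, hK⟩ := hF.isBigO_sub.bound
  obtain ⟨δ, hδ, hball⟩ := Metric.eventually_nhds_iff.1 hK
  refine ⟨max K (B / δ), fun t => ?_⟩
  rcases lt_or_ge (dist t x) δ with ht | ht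
  · have := hball ht
    simp only [Real.norm_eq_abs] at this
    exact this.trans (mul_le_mul_of_nonneg_right (le_max_left _ _) (abs_nonneg _))
  · rw [Real.dist_eq] at ht
    calc |F t - F x| ≤ B := hB t
      _ = B / δ * δ := by field_simp
      _ ≤ max K (B / δ) * |t - x| :=
        mul_le_mul (le_max_right _ _) ht hδ.le
          (le_max_of_le_right (div_nonneg ((abs_nonneg _).trans (hB x)) hδ.le))

lemma HasDerivAt.tendsto_comp_sub_div_nhdsGT {F s : ℝ → ℝ} {d c x : ℝ} (hF : HasDerivAt F d x)
    (hs : HasDerivAt s c 0) (hs0 : s 0 = x) :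
    Tendsto (fun η => (F (s η) - F x) / η) (𝓝[>] 0) (𝓝 (d * c)) := by
  have := ((hs0 ▸ hF).comp 0 hs).tendsto_slope_zero_right
  simpa [hs0, div_eq_inv_mul] using this

lemma hasDerivAt_band_edge (u m : ℝ) : HasDerivAt (fun η : ℝ => -η * u + m * η ^ 2) (-u) 0 := by
  simpa using ((hasDerivAt_id (0 : ℝ)).neg.mul_const u).fun_add
    ((hasDerivAt_pow 2 (0 : ℝ)).const_mul m)

lemma abs_withDensity_real_Ioc_sub_le {f : ℝ → ℝ} {a b x ε : ℝ} (hab : a ≤ b) (hfx : 0 ≤ f x)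
    (hf : ∀ y ∈ Ioc a b, |f y - f x| ≤ ε) :
    |(volume.withDensity fun t => ENNReal.ofReal (f t)).real (Ioc a b) - f x * (b - a)|
      ≤ ε * (b - a) := by
  obtain rfl | hab := hab.eq_or_lt
  · simp
  have hε : 0 ≤ ε := (abs_nonneg _).trans (hf b ⟨hab, le_rfl⟩)
  set μ := volume.withDensity fun t => ENNReal.ofReal (f t)
  have hconst (c : ℝ) : ∫⁻ _ in Ioc a b, ENNReal.ofReal c = ENNReal.ofReal (c * (b - a)) := by
    rw [setLIntegral_const, Real.volume_Ioc, ENNReal.ofReal_mul' (sub_nonneg.2 hab.le)]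
  have hupper : μ (Ioc a b) ≤ ENNReal.ofReal ((f x + ε) * (b - a)) := by
    rw [withDensity_apply _ measurableSet_Ioc, ← hconst]
    exact setLIntegral_mono' measurableSet_Ioc fun y hy =>
      ENNReal.ofReal_le_ofReal (by linarith [(abs_le.1 (hf y hy)).2])
  have hlower : ENNReal.ofReal ((f x - ε) * (b - a)) ≤ μ (Ioc a b) := by
    rw [withDensity_apply _ measurableSet_Ioc, ← hconst]
    exact setLIntegral_mono' measurableSet_Ioc fun y hy =>
      ENNReal.ofReal_le_ofReal (by linarith [(abs_le.1 (hf y hy)).1])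
  have hupper' : μ.real (Ioc a b) ≤ (f x + ε) * (b - a) :=
    ENNReal.toReal_le_of_le_ofReal (by nlinarith) hupper
  have hlower' : (f x - ε) * (b - a) ≤ μ.real (Ioc a b) :=
    (ENNReal.ofReal_le_iff_le_toReal (ne_top_of_le_ne_top ENNReal.ofReal_ne_top hupper)).1 hlower
  rw [abs_le]
  constructor <;> linarith

lemma measureReal_Ioc_eq_max_cdf_sub (μ : Measure ℝ) [IsProbabilityMeasure μ] (a b : ℝ) :
    μ.real (Ioc a b) = max (cdf μ b - cdf μ a) 0 := by
  have h := (cdf μ).measure_Ioc a b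
  rw [measure_cdf] at h
  rw [measureReal_def, h, ENNReal.toReal_ofReal']

lemma hasDerivAt_cdf_of_withDensity {μ : Measure ℝ} [IsProbabilityMeasure μ] {f : ℝ → ℝ} {x : ℝ}
    (hμ : μ = volume.withDensity fun t => ENNReal.ofReal (f t)) (hfx : 0 ≤ f x)
    (hf : ContinuousAt f x) : HasDerivAt (cdf μ) (f x) x := by
  rw [hasDerivAt_iff_isLittleO, Asymptotics.isLittleO_iff]
  intro ε hε
  obtain ⟨δ, hδ, hfδ⟩ := Metric.continuousAt_iff.1 hf ε hε
  filter_upwards [Metric.ball_mem_nhds x hδ] with t ht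
  have hclose {a b : ℝ} (ha : dist a x < δ) (hb : dist b x < δ) (y : ℝ) (hy : y ∈ Ioc a b) :
      |f y - f x| ≤ ε := by
    refine (hfδ ?_).le
    rw [Real.dist_eq, abs_lt] at *
    constructor <;> linarith [hy.1, hy.2]
  have hx : dist x x < δ := by simpa using hδ
  have hsub {a b : ℝ} (hab : a ≤ b) : cdf μ b - cdf μ a = μ.real (Ioc a b) := by
    rw [measureReal_Ioc_eq_max_cdf_sub, max_eq_left (sub_nonneg.2 (monotone_cdf μ hab))]
  rw [smul_eq_mul, Real.norm_eq_abs, Real.norm_eq_abs]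
  rcases le_total x t with hxt | htx
  · rw [hsub hxt, hμ, abs_of_nonneg (sub_nonneg.2 hxt), mul_comm (t - x)]
    exact abs_withDensity_real_Ioc_sub_le hxt hfx (hclose hx ht)
  · rw [← neg_sub (cdf μ x), hsub htx, hμ, abs_of_nonpos (sub_nonpos.2 htx), ← abs_neg]
    convert abs_withDensity_real_Ioc_sub_le htx hfx (hclose ht hx) using 2 <;> ring

lemma ProbabilityTheory.IndepFun.measureReal_preimage_eq_integral {Ω α β : Type*}
    [MeasurableSpace Ω] [MeasurableSpace α] [MeasurableSpace β] {P : Measure Ω} [IsFiniteMeasure P]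
    {X : Ω → β} {U : Ω → α} (hX : Measurable X) (hU : Measurable U) (hXU : IndepFun X U P)
    {S : Set (α × β)} (hS : MeasurableSet S) :
    P.real ((fun ω => (U ω, X ω)) ⁻¹' S) = ∫ u, (P.map X).real (Prod.mk u ⁻¹' S) ∂(P.map U) := by
  have hmap : P.map (fun ω => (U ω, X ω)) = (P.map U).prod (P.map X) :=
    hXU.symm.map_prod_eq_prod_map_map hU.aemeasurable hX.aemeasurable
  rw [measureReal_def, ← Measure.map_apply (hU.prodMk hX) hS, hmap, Measure.prod_apply hS,
    ← integral_toReal (measurable_measure_prodMk_left hS).aemeasurable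
      (Eventually.of_forall fun u => measure_lt_top _ _)]
  rfl

/-- Points are `(u, x)`: update coefficient, then preactivation. -/
def flipBand (η m : ℝ) : Set (ℝ × ℝ) :=
  {z | z.2 ∈ Ioc 0 (-η * z.1 + m) ∪ Ioc (-η * z.1 - m) 0}

lemma measurableSet_flipBand (η m : ℝ) : MeasurableSet (flipBand η m) :=
  ((measurableSet_lt measurable_const measurable_snd).inter
      (measurableSet_le measurable_snd (by fun_prop))).union
    ((measurableSet_lt (by fun_prop) measurable_snd).inter
      (measurableSet_le measurable_snd measurable_const))

lemma lt_add_ne_lt_iff (x v : ℝ) : (0 < x + v) ≠ (0 < x) ↔ x ∈ Ioc 0 (-v) ∪ Ioc (-v) 0 := by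
  simp only [ne_eq, eq_iff_iff, mem_union, mem_Ioc]
  constructor
  · intro h
    by_cases hx : 0 < x
    · exact Or.inl ⟨hx, by by_contra h'; exact h (iff_of_true (by linarith) hx)⟩
    · exact Or.inr ⟨by by_contra h'; exact h (iff_of_false (by linarith) hx), not_lt.1 hx⟩
  · rintro (⟨h0, h⟩ | ⟨h, h0⟩) hiff
    · linarith [hiff.2 h0]
    · exact absurd (hiff.1 (by linarith)) (not_lt.2 h0)

lemma mem_flipBand_of_lt_add_ne_lt {η m u x r : ℝ} (hr : |r| ≤ m)
    (h : (0 < x + η * u + r) ≠ (0 < x)) : (u, x) ∈ flipBand η m := by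
  rw [add_assoc, lt_add_ne_lt_iff] at h
  obtain ⟨hr₁, hr₂⟩ := abs_le.1 hr
  exact h.imp (fun h => Ioc_subset_Ioc le_rfl (by linarith) h)
    (fun h => Ioc_subset_Ioc (by linarith) le_rfl h)

lemma lt_add_ne_lt_of_mem_flipBand_neg {η m u x r : ℝ} (hr : |r| ≤ m)
    (h : (u, x) ∈ flipBand η (-m)) : (0 < x + η * u + r) ≠ (0 < x) := by
  rw [add_assoc, lt_add_ne_lt_iff]
  obtain ⟨hr₁, hr₂⟩ := abs_le.1 hr
  exact h.imp (fun h => Ioc_subset_Ioc le_rfl (by linarith) h)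
    (fun h => Ioc_subset_Ioc (by linarith) le_rfl h)

lemma measureReal_preimage_mk_flipBand (μ : Measure ℝ) [IsProbabilityMeasure μ] (η m u : ℝ) :
    μ.real (Prod.mk u ⁻¹' flipBand η m) =
      max (cdf μ (-η * u + m) - cdf μ 0) 0 + max (cdf μ 0 - cdf μ (-η * u - m)) 0 := by
  have hdisj : Disjoint (Ioc 0 (-η * u + m)) (Ioc (-η * u - m) 0) :=
    disjoint_left.2 fun x hx₁ hx₂ => (not_le.2 hx₁.1) hx₂.2
  change μ.real (Ioc 0 (-η * u + m) ∪ Ioc (-η * u - m) 0) = _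
  rw [measureReal_union hdisj measurableSet_Ioc, measureReal_Ioc_eq_max_cdf_sub,
    measureReal_Ioc_eq_max_cdf_sub]

lemma tendsto_measureReal_preimage_mk_flipBand_div (μ : Measure ℝ) [IsProbabilityMeasure μ]
    {d : ℝ} (hd : HasDerivAt (cdf μ) d 0) (a u : ℝ) :
    Tendsto (fun η => μ.real (Prod.mk u ⁻¹' flipBand η (a * η ^ 2)) / η) (𝓝[>] 0)
      (𝓝 (|d| * |u|)) := by
  have h₁ := hd.tendsto_comp_sub_div_nhdsGT (hasDerivAt_band_edge u a) (by simp)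
  have h₂ := hd.tendsto_comp_sub_div_nhdsGT (hasDerivAt_band_edge u (-a)) (by simp)
  have h := (h₁.max (tendsto_const_nhds (x := 0))).add (h₂.neg.max (tendsto_const_nhds (x := 0)))
  rw [max_zero_add_max_neg_zero_eq_abs_self, abs_mul, abs_neg] at h
  refine h.congr' ?_
  filter_upwards [self_mem_nhdsWithin] with η (hη : 0 < η)
  have hmax (x : ℝ) : max (x / η) 0 = max x 0 / η := by
    rw [← max_div_div_right hη.le, zero_div]
  rw [measureReal_preimage_mk_flipBand, add_div, ← neg_div, hmax, hmax, neg_sub, neg_mul a,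
    ← sub_eq_add_neg]

lemma measureReal_preimage_mk_flipBand_div_le (μ : Measure ℝ) [IsProbabilityMeasure μ] {L : ℝ}
    (hL : ∀ t, |cdf μ t - cdf μ 0| ≤ L * |t|) (a u : ℝ) {η : ℝ} (hη : 0 < η) (hη₁ : η ≤ 1) :
    μ.real (Prod.mk u ⁻¹' flipBand η (a * η ^ 2)) / η ≤ 2 * L * (|u| + |a|) := by
  have hL₀ : 0 ≤ L := by simpa using (abs_nonneg _).trans (hL 1)
  have hedge (σ : ℝ) (hσ : |σ| = |a|) :
      |cdf μ (-η * u + σ * η ^ 2) - cdf μ 0| ≤ L * (η * (|u| + |a|)) := by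
    refine (hL _).trans (mul_le_mul_of_nonneg_left ?_ hL₀)
    calc |-η * u + σ * η ^ 2| ≤ η * |u| + |a| * η ^ 2 := by
          refine (abs_add_le _ _).trans_eq ?_
          rw [abs_mul, abs_mul, abs_neg, hσ, abs_of_pos hη, abs_of_nonneg (sq_nonneg η)]
      _ ≤ η * (|u| + |a|) := by
          nlinarith [mul_nonneg (mul_nonneg (abs_nonneg a) hη.le) (sub_nonneg.2 hη₁)]
  have h₁ := hedge a rfl
  have h₂ := hedge (-a) (abs_neg a)
  rw [neg_mul a, ← sub_eq_add_neg, abs_sub_comm] at h₂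
  rw [div_le_iff₀ hη, measureReal_preimage_mk_flipBand]
  calc _ ≤ |cdf μ (-η * u + a * η ^ 2) - cdf μ 0| + |cdf μ 0 - cdf μ (-η * u - a * η ^ 2)| :=
        add_le_add (max_le (le_abs_self _) (abs_nonneg _)) (max_le (le_abs_self _) (abs_nonneg _))
    _ ≤ 2 * L * (|u| + |a|) * η := by linarith

lemma tendsto_integral_measureReal_preimage_mk_flipBand_div (μ ν : Measure ℝ)
    [IsProbabilityMeasure μ] [IsProbabilityMeasure ν] {d : ℝ} (hd : HasDerivAt (cdf μ) d 0)
    (hν : Integrable (fun u => u) ν) (a : ℝ) :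
    Tendsto (fun η => (∫ u, μ.real (Prod.mk u ⁻¹' flipBand η (a * η ^ 2)) ∂ν) / η) (𝓝[>] 0)
      (𝓝 (|d| * ∫ u, |u| ∂ν)) := by
  obtain ⟨L, hL⟩ := hd.exists_abs_sub_le_mul_abs (B := 1) fun t =>
    abs_sub_le_iff.2 ⟨by linarith [cdf_le_one μ t, cdf_nonneg μ 0],
      by linarith [cdf_le_one μ 0, cdf_nonneg μ t]⟩
  simp only [sub_zero] at hL
  simp_rw [← integral_div]
  rw [← integral_const_mul]
  refine tendsto_integral_filter_of_dominated_convergence (fun u => 2 * L * (|u| + |a|))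
    (Eventually.of_forall fun η => ?_) ?_ ((hν.abs.add (integrable_const _)).const_mul _)
    (Eventually.of_forall (tendsto_measureReal_preimage_mk_flipBand_div μ hd a))
  · exact ((measurable_measure_prodMk_left (measurableSet_flipBand _ _)).ennreal_toReal.div_const
      η).aestronglyMeasurable
  · filter_upwards [Ioc_mem_nhdsGT zero_lt_one] with η ⟨hη, hη₁⟩
    refine Eventually.of_forall fun u => ?_
    rw [Real.norm_of_nonneg (by positivity)]
    exact measureReal_preimage_mk_flipBand_div_le μ hL a u hη hη₁

end

theorem flip_rate_law_general
    {Ω : Type*} [MeasurableSpace Ω] (ℙ : Measure Ω) [IsProbabilityMeasure ℙ]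
    (X U : Ω → ℝ) (hX : Measurable X) (hU : Measurable U)
    (f : ℝ → ℝ) (hf_nonneg : ∀ t, 0 ≤ f t)
    (hXf : Measure.map X ℙ = volume.withDensity fun t => ENNReal.ofReal (f t))
    (hf_cont : ContinuousAt f 0)
    (hU_int : Integrable U ℙ)
    (hindep : ProbabilityTheory.IndepFun X U ℙ)
    (C : ℝ)
    (R : ℝ → Ω → ℝ)
    (hR_bound : ∀ η > 0, ∀ ω, |R η ω| ≤ C * η ^ 2) :
    Tendsto
      (fun η : ℝ =>
        (ℙ {ω | (0 < X ω + η * U ω + R η ω) ≠ (0 < X ω)}).toReal / η)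
      (𝓝[>] 0) (𝓝 (f 0 * ∫ ω, |U ω| ∂ℙ)) := by
  have := Measure.isProbabilityMeasure_map (μ := ℙ) hX.aemeasurable
  have := Measure.isProbabilityMeasure_map (μ := ℙ) hU.aemeasurable
  have hd := hasDerivAt_cdf_of_withDensity hXf (hf_nonneg 0) hf_cont
  have hband (a : ℝ) : Tendsto
      (fun η => ℙ.real ((fun ω => (U ω, X ω)) ⁻¹' flipBand η (a * η ^ 2)) / η) (𝓝[>] 0)
      (𝓝 (f 0 * ∫ ω, |U ω| ∂ℙ)) := by
    simp_rw [hindep.measureReal_preimage_eq_integral hX hU (measurableSet_flipBand _ _)]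
    rw [← abs_of_nonneg (hf_nonneg 0),
      ← integral_map hU.aemeasurable continuous_abs.aestronglyMeasurable]
    exact tendsto_integral_measureReal_preimage_mk_flipBand_div _ _ hd
      ((integrable_map_measure aestronglyMeasurable_id hU.aemeasurable).2 hU_int) a
  refine tendsto_of_tendsto_of_tendsto_of_le_of_le' (hband (-C)) (hband C) ?_ ?_ <;>
    filter_upwards [self_mem_nhdsWithin] with η (hη : 0 < η) <;>
    refine div_le_div_of_nonneg_right (measureReal_mono fun ω hω => ?_) hη.le
  · exact lt_add_ne_lt_of_mem_flipBand_neg (hR_bound η hη ω) (by simpa [neg_mul] using hω)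
  · exact mem_flipBand_of_lt_add_ne_lt (hR_bound η hη ω) hω

/-- Proposition 1 (flip-rate law): for a preactivation `X` with density `f`
continuous at `0`, an integrable update coefficient `U` independent of `X`,
and second-order remainders `R η` bounded by `C * η ^ 2`, the probability of an
activation sign flip satisfies `ℙ(flip at step η) / η → f 0 * 𝔼[|U|]` as `η → 0⁺`. -/
theorem flip_rate_law
    {Ω : Type*} [MeasurableSpace Ω] (ℙ : Measure Ω) [IsProbabilityMeasure ℙ]
    (X U : Ω → ℝ) (hX : Measurable X) (hU : Measurable U)
    (f : ℝ → ℝ) (hf_nonneg : ∀ t, 0 ≤ f t)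
    (hXf : Measure.map X ℙ = volume.withDensity fun t => ENNReal.ofReal (f t))
    (hf_cont : ContinuousAt f 0)
    (hU_int : Integrable U ℙ)
    (hindep : ProbabilityTheory.IndepFun X U ℙ)
    (C : ℝ) (hC : 0 ≤ C)
    (R : ℝ → Ω → ℝ) (hR_meas : ∀ η, Measurable (R η))
    (hR_bound : ∀ η > 0, ∀ ω, |R η ω| ≤ C * η ^ 2) :
    Tendsto
      (fun η : ℝ =>
        (ℙ {ω | (0 < X ω + η * U ω + R η ω) ≠ (0 < X ω)}).toReal / η)
      (𝓝[>] 0) (𝓝 (f 0 * ∫ ω, |U ω| ∂ℙ)) :=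
  flip_rate_law_general ℙ X U hX hU f hf_nonneg hXf hf_cont hU_int hindep C R hR_bound
end

section
/- Let (Ω, 𝓕, ℙ) be a probability space, X : Ω → ℝ a random variable whose law has density f : ℝ → ℝ with respect to Lebesgue measure, with f continuous at 0. Fix u ∈ ℝ and C ≥ 0, and for each η > 0 let R_η : Ω → ℝ be measurable with |R_η(ω)| ≤ C·η² for all ω. Then ℙ( 1{X + ηu + R_η > 0} ≠ 1{X > 0} ) = η·|u|·f(0) + o(η) as η → 0⁺. (Conditional case of Proposition 1 with a deterministic update coefficient u.) -/
open MeasureTheory Filter Topology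

lemma meas_Ioc {Ω : Type*} [MeasurableSpace Ω] (ℙ : Measure Ω)
    (X : Ω → ℝ) (hX : Measurable X) (f : ℝ → ℝ)
    (hXf : Measure.map X ℙ = volume.withDensity fun t => ENNReal.ofReal (f t))
    (a b : ℝ) :
    ℙ (X ⁻¹' Set.Ioc a b) = ∫⁻ t in Set.Ioc a b, ENNReal.ofReal (f t) := by
  rw [← Measure.map_apply hX measurableSet_Ioc, hXf,
    withDensity_apply _ measurableSet_Ioc]

lemma meas_Ioc_le {Ω : Type*} [MeasurableSpace Ω] (ℙ : Measure Ω)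
    (X : Ω → ℝ) (hX : Measurable X) (f : ℝ → ℝ)
    (hXf : Measure.map X ℙ = volume.withDensity fun t => ENNReal.ofReal (f t))
    (a b : ℝ) (M : ℝ) (hM : 0 ≤ M) (h : ∀ t ∈ Set.Ioc a b, f t ≤ M) :
    (ℙ (X ⁻¹' Set.Ioc a b)).toReal ≤ M * max (b - a) 0 := by
  rw [meas_Ioc ℙ X hX f hXf]
  have h1 : ∫⁻ t in Set.Ioc a b, ENNReal.ofReal (f t)
      ≤ ENNReal.ofReal M * volume (Set.Ioc a b) := by
    rw [← setLIntegral_const]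
    exact setLIntegral_mono' measurableSet_Ioc
      (fun t ht => ENNReal.ofReal_le_ofReal (h t ht))
  have h2 : ENNReal.ofReal M * volume (Set.Ioc a b) ≠ ⊤ :=
    ENNReal.mul_ne_top ENNReal.ofReal_ne_top (by simp [Real.volume_Ioc])
  calc (∫⁻ t in Set.Ioc a b, ENNReal.ofReal (f t)).toReal
      ≤ (ENNReal.ofReal M * volume (Set.Ioc a b)).toReal :=
        ENNReal.toReal_mono h2 h1
    _ = M * max (b - a) 0 := by
        rw [Real.volume_Ioc, ENNReal.toReal_mul, ENNReal.toReal_ofReal hM,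
          ENNReal.toReal_ofReal']

lemma le_meas_Ioc {Ω : Type*} [MeasurableSpace Ω] (ℙ : Measure Ω) [IsFiniteMeasure ℙ]
    (X : Ω → ℝ) (hX : Measurable X) (f : ℝ → ℝ)
    (hXf : Measure.map X ℙ = volume.withDensity fun t => ENNReal.ofReal (f t))
    (a b : ℝ) (m : ℝ) (hm : 0 ≤ m) (h : ∀ t ∈ Set.Ioc a b, m ≤ f t) :
    m * (b - a) ≤ (ℙ (X ⁻¹' Set.Ioc a b)).toReal := by
  rcases le_or_gt b a with hba | hab
  · have : m * (b - a) ≤ 0 := mul_nonpos_of_nonneg_of_nonpos hm (by linarith)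
    exact this.trans ENNReal.toReal_nonneg
  · rw [meas_Ioc ℙ X hX f hXf]
    have h1 : ENNReal.ofReal m * volume (Set.Ioc a b)
        ≤ ∫⁻ t in Set.Ioc a b, ENNReal.ofReal (f t) := by
      rw [← setLIntegral_const]
      exact setLIntegral_mono' measurableSet_Ioc
        (fun t ht => ENNReal.ofReal_le_ofReal (h t ht))
    have h2 : (∫⁻ t in Set.Ioc a b, ENNReal.ofReal (f t)) ≠ ⊤ := by
      rw [← meas_Ioc ℙ X hX f hXf]
      exact measure_ne_top _ _
    calc m * (b - a)
        = (ENNReal.ofReal m * volume (Set.Ioc a b)).toReal := by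
          rw [Real.volume_Ioc, ENNReal.toReal_mul, ENNReal.toReal_ofReal hm,
            ENNReal.toReal_ofReal (by linarith)]
      _ ≤ _ := ENNReal.toReal_mono h2 h1

set_option maxHeartbeats 1000000 in
/-- Conditional case of Proposition 1: with a deterministic update coefficient `u`,
the flip probability satisfies `ℙ(flip at step η) = η * |u| * f 0 + o(η)` as `η → 0⁺`,
i.e. `ℙ(flip at step η) / η → |u| * f 0`. -/
theorem flip_rate_law_deterministic
    {Ω : Type*} [MeasurableSpace Ω] (ℙ : Measure Ω) [IsProbabilityMeasure ℙ]
    (X : Ω → ℝ) (hX : Measurable X)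
    (f : ℝ → ℝ) (hf_nonneg : ∀ t, 0 ≤ f t)
    (hXf : Measure.map X ℙ = volume.withDensity fun t => ENNReal.ofReal (f t))
    (hf_cont : ContinuousAt f 0)
    (u : ℝ) (C : ℝ) (hC : 0 ≤ C)
    (R : ℝ → Ω → ℝ) (hR_meas : ∀ η, Measurable (R η))
    (hR_bound : ∀ η > 0, ∀ ω, |R η ω| ≤ C * η ^ 2) :
    Tendsto
      (fun η : ℝ =>
        (ℙ {ω | (0 < X ω + η * u + R η ω) ≠ (0 < X ω)}).toReal / η)
      (𝓝[>] 0) (𝓝 (|u| * f 0)) := by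
  rw [Metric.tendsto_nhdsWithin_nhds]
  intro ε hε
  have hf0nn : 0 ≤ f 0 := hf_nonneg 0
  have hunn : (0:ℝ) ≤ |u| := abs_nonneg u
  set ε' : ℝ := ε / (2 * (|u| + 1)) with hε'def
  have hε'pos : 0 < ε' := by positivity
  obtain ⟨δ₀, hδ₀pos, hδ₀⟩ := Metric.continuousAt_iff.mp hf_cont ε' hε'pos
  set K : ℝ := 2 * C * (f 0 + ε') + 1 with hKdef
  have hKpos : 0 < K := by positivity
  refine ⟨min (δ₀ / (|u| + C + 1)) (min 1 (ε / (2 * K))), by positivity, ?_⟩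
  intro η hη hdist
  simp only [Set.mem_Ioi] at hη
  rw [Real.dist_eq, sub_zero, abs_of_pos hη] at hdist
  have hη1 : η < 1 := lt_of_lt_of_le hdist ((min_le_right _ _).trans (min_le_left _ _))
  have hηδ₀ : η < δ₀ / (|u| + C + 1) := lt_of_lt_of_le hdist (min_le_left _ _)
  have hηε : η < ε / (2 * K) :=
    lt_of_lt_of_le hdist ((min_le_right _ _).trans (min_le_right _ _))
  have hηK : η * (2 * C * (f 0 + ε') + 1) < ε / 2 := by
    rw [lt_div_iff₀ (by positivity)] at hηε
    rw [← hKdef]; nlinarith [hηε]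
  -- basic product facts
  have hprodu : η * u ≤ η * |u| := mul_le_mul_of_nonneg_left (le_abs_self u) hη.le
  have hprodl : -(η * |u|) ≤ η * u := by
    have := mul_le_mul_of_nonneg_left (neg_abs_le u) hη.le
    linarith
  have hCη2 : (0:ℝ) ≤ C * η ^ 2 := by positivity
  have hηu : (0:ℝ) ≤ η * |u| := by positivity
  -- continuity bounds for small t
  have hsmall : ∀ t : ℝ, |t| ≤ η * |u| + C * η ^ 2 →
      f t ≤ f 0 + ε' ∧ f 0 - ε' ≤ f t := by
    intro t ht
    have h1 : |t| < δ₀ := by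
      have hle : C * η ^ 2 ≤ C * η := by
        have := mul_nonneg (mul_nonneg hC hη.le) (by linarith : (0:ℝ) ≤ 1 - η)
        nlinarith
      have h2 : η * (|u| + C + 1) < δ₀ := by
        rw [lt_div_iff₀ (by positivity)] at hηδ₀
        linarith [hηδ₀]
      nlinarith [mul_nonneg hη.le hC]
    have := hδ₀ (show dist t 0 < δ₀ by rwa [Real.dist_eq, sub_zero])
    rw [Real.dist_eq] at this
    have h3 := abs_lt.mp this
    constructor <;> linarith [h3.1, h3.2]
  set S := {ω | (0 < X ω + η * u + R η ω) ≠ (0 < X ω)} with hSdef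
  have hR' : ∀ ω, -(C * η ^ 2) ≤ R η ω ∧ R η ω ≤ C * η ^ 2 := by
    intro ω; exact abs_le.mp (hR_bound η hη ω)
  -- upper bound
  have hub : (ℙ S).toReal ≤ (f 0 + ε') * (η * |u| + 2 * (C * η ^ 2)) := by
    have hsub : S ⊆ X ⁻¹' Set.Ioc (-(η * u) - C * η ^ 2) 0
        ∪ X ⁻¹' Set.Ioc 0 (-(η * u) + C * η ^ 2) := by
      intro ω hω
      simp only [hSdef, Set.mem_setOf_eq] at hω
      obtain ⟨hR1, hR2⟩ := hR' ω
      by_cases hx : 0 < X ω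
      · right
        have hns : ¬ (0 < X ω + η * u + R η ω) := fun h =>
          hω (by rw [eq_iff_iff]; exact iff_of_true h hx)
        push_neg at hns
        exact ⟨hx, by linarith⟩
      · left
        have hs : 0 < X ω + η * u + R η ω := by
          by_contra h
          exact hω (by rw [eq_iff_iff]; exact iff_of_false h hx)
        push_neg at hx
        exact ⟨by linarith, hx⟩
    have hA := meas_Ioc_le ℙ X hX f hXf (-(η * u) - C * η ^ 2) 0 (f 0 + ε')
      (by linarith) (fun t ht => (hsmall t (by
        rw [abs_le]; exact ⟨by linarith [ht.1], by linarith [ht.2]⟩)).1)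
    have hB := meas_Ioc_le ℙ X hX f hXf 0 (-(η * u) + C * η ^ 2) (f 0 + ε')
      (by linarith) (fun t ht => (hsmall t (by
        rw [abs_le]; exact ⟨by linarith [ht.1], by linarith [ht.2]⟩)).1)
    have hmaxsum : max (0 - (-(η * u) - C * η ^ 2)) 0
        + max (-(η * u) + C * η ^ 2 - 0) 0 ≤ η * |u| + 2 * (C * η ^ 2) := by
      rcases le_total 0 u with hu | hu
      · have huabs : η * |u| = η * u := by rw [abs_of_nonneg hu]
        have e1 : max (0 - (-(η * u) - C * η ^ 2)) 0 = η * u + C * η ^ 2 := by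
          rw [max_eq_left]; · ring
          · nlinarith [mul_nonneg hη.le hu]
        have e2 : max (-(η * u) + C * η ^ 2 - 0) 0 ≤ C * η ^ 2 :=
          max_le (by nlinarith [mul_nonneg hη.le hu]) hCη2
        linarith
      · have huabs : η * |u| = -(η * u) := by rw [abs_of_nonpos hu]; ring
        have hnu : (0:ℝ) ≤ -(η * u) := by nlinarith [mul_nonneg hη.le (neg_nonneg.mpr hu)]
        have e1 : max (-(η * u) + C * η ^ 2 - 0) 0 = -(η * u) + C * η ^ 2 := by
          rw [max_eq_left]; · ring
          · linarith
        have e2 : max (0 - (-(η * u) - C * η ^ 2)) 0 ≤ C * η ^ 2 :=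
          max_le (by linarith) hCη2
        linarith
    have hmono : ℙ S ≤ ℙ (X ⁻¹' Set.Ioc (-(η * u) - C * η ^ 2) 0)
        + ℙ (X ⁻¹' Set.Ioc 0 (-(η * u) + C * η ^ 2)) :=
      (measure_mono hsub).trans (measure_union_le _ _)
    have htr : (ℙ S).toReal ≤ (ℙ (X ⁻¹' Set.Ioc (-(η * u) - C * η ^ 2) 0)).toReal
        + (ℙ (X ⁻¹' Set.Ioc 0 (-(η * u) + C * η ^ 2))).toReal := by
      rw [← ENNReal.toReal_add (measure_ne_top _ _) (measure_ne_top _ _)]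
      exact ENNReal.toReal_mono (by finiteness) hmono
    have hmul := mul_le_mul_of_nonneg_left hmaxsum (by linarith : (0:ℝ) ≤ f 0 + ε')
    nlinarith [htr, hA, hB, hmul]
  -- lower bound
  set m : ℝ := max (f 0 - ε') 0 with hmdef
  have hm0 : (0:ℝ) ≤ m := le_max_right _ _
  have hmle : m ≤ f 0 := max_le (by linarith) hf0nn
  have hmge : f 0 - ε' ≤ m := le_max_left _ _
  have hlb : m * (η * |u| - C * η ^ 2) ≤ (ℙ S).toReal := by
    rcases le_or_gt (η * |u| - C * η ^ 2) 0 with hL | hL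
    · exact (mul_nonpos_of_nonneg_of_nonpos hm0 hL).trans ENNReal.toReal_nonneg
    · have hbound : ∀ a b : ℝ, (∀ t ∈ Set.Ioc a b, |t| ≤ η * |u| + C * η ^ 2) →
          ∀ t ∈ Set.Ioc a b, m ≤ f t := by
        intro a b habs t ht
        exact max_le (hsmall t (habs t ht)).2 (hf_nonneg t)
      rcases le_total 0 u with hu | hu
      · have huabs : η * |u| = η * u := by rw [abs_of_nonneg hu]
        have hsub : X ⁻¹' Set.Ioc (C * η ^ 2 - η * u) 0 ⊆ S := by
          intro ω hω
          obtain ⟨h1, h2⟩ := hω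
          obtain ⟨hR1, hR2⟩ := hR' ω
          have hA : 0 < X ω + η * u + R η ω := by linarith
          have hB : ¬ 0 < X ω := not_lt.mpr h2
          simp only [hSdef, Set.mem_setOf_eq]
          intro heq
          rw [eq_iff_iff] at heq
          exact hB (heq.mp hA)
        have hkey := le_meas_Ioc ℙ X hX f hXf (C * η ^ 2 - η * u) 0 m hm0
          (hbound _ _ (fun t ht => by
            rw [abs_le]
            exact ⟨by linarith [ht.1], by linarith [ht.2]⟩))
        have hmono : (ℙ (X ⁻¹' Set.Ioc (C * η ^ 2 - η * u) 0)).toReal ≤ (ℙ S).toReal :=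
          ENNReal.toReal_mono (measure_ne_top _ _) (measure_mono hsub)
        have heq2 : m * (0 - (C * η ^ 2 - η * u)) = m * (η * |u| - C * η ^ 2) := by
          rw [huabs]; ring
        linarith [hkey, hmono, heq2.le, heq2.symm.le]
      · have huabs : η * |u| = -(η * u) := by rw [abs_of_nonpos hu]; ring
        have hsub : X ⁻¹' Set.Ioc 0 (-(η * u) - C * η ^ 2) ⊆ S := by
          intro ω hω
          obtain ⟨h1, h2⟩ := hω
          obtain ⟨hR1, hR2⟩ := hR' ω
          have hA : ¬ 0 < X ω + η * u + R η ω := not_lt.mpr (by linarith)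
          simp only [hSdef, Set.mem_setOf_eq]
          intro heq
          rw [eq_iff_iff] at heq
          exact hA (heq.mpr h1)
        have hkey := le_meas_Ioc ℙ X hX f hXf 0 (-(η * u) - C * η ^ 2) m hm0
          (hbound _ _ (fun t ht => by
            rw [abs_le]
            exact ⟨by linarith [ht.1], by linarith [ht.2]⟩))
        have hmono : (ℙ (X ⁻¹' Set.Ioc 0 (-(η * u) - C * η ^ 2))).toReal ≤ (ℙ S).toReal :=
          ENNReal.toReal_mono (measure_ne_top _ _) (measure_mono hsub)
        have heq2 : m * (-(η * u) - C * η ^ 2 - 0) = m * (η * |u| - C * η ^ 2) := by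
          rw [huabs]; ring
        linarith [hkey, hmono, heq2.le, heq2.symm.le]
  -- conclude
  have hPnn : 0 ≤ (ℙ S).toReal := ENNReal.toReal_nonneg
  have hubdiv : (ℙ S).toReal / η ≤ (f 0 + ε') * (|u| + 2 * (C * η)) := by
    rw [div_le_iff₀ hη]
    have heq3 : (f 0 + ε') * (η * |u| + 2 * (C * η ^ 2))
        = (f 0 + ε') * (|u| + 2 * (C * η)) * η := by ring
    linarith [hub, heq3.le, heq3.symm.le]
  have hlbdiv : m * (|u| - C * η) ≤ (ℙ S).toReal / η := by
    rw [le_div_iff₀ hη]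
    have heq3 : m * (η * |u| - C * η ^ 2) = m * (|u| - C * η) * η := by ring
    linarith [hlb, heq3.le, heq3.symm.le]
  have hε'u : ε' * (|u| + 1) = ε / 2 := by
    rw [hε'def]; field_simp
  have h1 : |u| * (f 0 - m) ≤ |u| * ε' := mul_le_mul_of_nonneg_left (by linarith) hunn
  have h2 : m * (C * η) ≤ f 0 * (C * η) :=
    mul_le_mul_of_nonneg_right hmle (mul_nonneg hC hη.le)
  have h5 : (0:ℝ) ≤ C * η * f 0 := by positivity
  have h6 : (0:ℝ) ≤ C * η * ε' := by positivity
  rw [Real.dist_eq, abs_lt]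
  constructor
  · nlinarith [hlbdiv, h1, h2, hε'u, hε'pos, hηK, h5, h6, hη]
  · nlinarith [hubdiv, hε'u, hε'pos, hηK, hη, h5, h6]
end
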